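/- arXiv:math/0603537 — 7 statements merged into one kernel-verified Lean document; each statement's English description precedes it below -/
import Mathlib

section
/- Open subsets of a kω-space are locally kω. More precisely, every open neighbourhood W of a point x in a kω-space X contains an open neighbourhood U of x which is a kω-space in the subspace topology. -/
/-- `K` is a kω-sequence for the topological space `X`: an ascending sequence of
compact subsets covering `X` such that the topology of `X` is final with respect
to the inclusions `K n → X`. -/
def IsKOmegaSeq {X : Type*} [TopologicalSpace X] (K : ℕ → Set X) : Prop :=
  (∀ n, IsCompact (K n)) ∧ Monotone K ∧ (⋃ n, K n) = Set.univ ∧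
    ∀ U : Set X, IsOpen U ↔ ∀ n, IsOpen ((Subtype.val ⁻¹' U) : Set (K n))

/-- A kω-space: a Hausdorff space which is the direct limit of an ascending
sequence of compact subsets. -/
def IsKOmega (X : Type*) [TopologicalSpace X] : Prop :=
  T2Space X ∧ ∃ K : ℕ → Set X, IsKOmegaSeq K

/-- A locally kω space: a Hausdorff space each point of which has an open
neighbourhood which is a kω-space in the induced topology. -/
def IsLocallyKOmega (X : Type*) [TopologicalSpace X] : Prop :=
  T2Space X ∧ ∀ x : X, ∃ U : Set X, IsOpen U ∧ x ∈ U ∧ IsKOmega U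

open Topology in
/-- A set relatively open in `T` via an open set of `X` has open subtype preimage. -/
private lemma kw_relopen {X : Type*} [TopologicalSpace X] {T S G : Set X}
    (hG : IsOpen G) (h : S ∩ T = G ∩ T) :
    IsOpen ((Subtype.val ⁻¹' S) : Set T) := by
  have he : ((Subtype.val ⁻¹' S) : Set T) = Subtype.val ⁻¹' G := by
    ext ⟨y, hy⟩
    constructor
    · intro hS
      have hmem : y ∈ G ∩ T := h ▸ (⟨hS, hy⟩ : y ∈ S ∩ T)
      exact hmem.1
    · intro hGy
      have hmem : y ∈ S ∩ T := h.symm ▸ (⟨hGy, hy⟩ : y ∈ G ∩ T)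
      exact hmem.1
  rw [he]
  exact hG.preimage continuous_subtype_val

/-- Key normality step inside a compact subset of a Hausdorff space. -/
private lemma kw_key {X : Type*} [TopologicalSpace X] [T2Space X] {W K C : Set X}
    (hW : IsOpen W) (hK : IsCompact K) (hC : IsCompact C)
    (hCW : C ⊆ W) (hCK : C ⊆ K) :
    ∃ V : Set X, IsOpen V ∧ C ⊆ V ∧ closure (V ∩ K) ⊆ W := by
  haveI : CompactSpace K := isCompact_iff_compactSpace.mp hK
  have hC' : IsCompact ((Subtype.val ⁻¹' C) : Set K) := by
    rw [Subtype.isCompact_iff, Subtype.image_preimage_val,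
      Set.inter_eq_self_of_subset_right hCK]
    exact hC
  obtain ⟨u, hu_open, hu_sub, hu_cl⟩ := normal_exists_closure_subset hC'.isClosed
    (hW.preimage continuous_subtype_val) (fun z hz => hCW hz)
  obtain ⟨V, hV_open, hVu⟩ := isOpen_induced_iff.mp hu_open
  refine ⟨V, hV_open, ?_, ?_⟩
  · intro c hc
    have hmem : (⟨c, hCK hc⟩ : K) ∈ u := hu_sub hc
    rw [← hVu] at hmem
    exact hmem
  · have himg : V ∩ K = Subtype.val '' u := by
      rw [← hVu, Subtype.image_preimage_val, Set.inter_comm]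
    rw [himg, hK.isClosed.isClosedEmbedding_subtypeVal.closure_image_eq]
    rintro y ⟨z, hz, rfl⟩
    exact hu_cl hz

/-- Construction of the exhausting sequence of open sets. -/
private lemma kw_seq {X : Type*} [TopologicalSpace X] [T2Space X] {W : Set X}
    (hW : IsOpen W) (L : ℕ → Set X) (hLc : ∀ n, IsCompact (L n)) (hLm : Monotone L)
    {x : X} (hx0 : x ∈ L 0) (hxW : x ∈ W) :
    ∃ f : ℕ → Set X, x ∈ f 0 ∧ (∀ n, IsOpen (f n)) ∧
      (∀ n, closure (f n ∩ L n) ⊆ W) ∧ (∀ n, closure (f n ∩ L n) ⊆ f (n + 1)) := by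
  have hCsub : ∀ n (V : Set X), closure (V ∩ L n) ⊆ L n := fun n V =>
    closure_minimal Set.inter_subset_right (hLc n).isClosed
  have hCcomp : ∀ n (V : Set X), IsCompact (closure (V ∩ L n)) := fun n V =>
    (hLc n).of_isClosed_subset isClosed_closure (hCsub n V)
  let P : ℕ → Type _ := fun n => {V : Set X // IsOpen V ∧ closure (V ∩ L n) ⊆ W}
  have h0 := kw_key hW (hLc 0) isCompact_singleton
    (Set.singleton_subset_iff.mpr hxW) (Set.singleton_subset_iff.mpr hx0)
  let base : P 0 := ⟨h0.choose, h0.choose_spec.1, h0.choose_spec.2.2⟩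
  have hstep : ∀ n (p : P n), ∃ V : Set X, IsOpen V ∧ closure (p.1 ∩ L n) ⊆ V ∧
      closure (V ∩ L (n + 1)) ⊆ W := fun n p =>
    kw_key hW (hLc (n + 1)) (hCcomp n p.1) p.2.2
      ((hCsub n p.1).trans (hLm (Nat.le_succ n)))
  let step : ∀ n, P n → P (n + 1) := fun n p =>
    ⟨(hstep n p).choose, (hstep n p).choose_spec.1, (hstep n p).choose_spec.2.2⟩
  let F : ∀ n, P n := fun n => Nat.rec base step n
  refine ⟨fun n => (F n).1, ?_, fun n => (F n).2.1, fun n => (F n).2.2, ?_⟩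
  · exact h0.choose_spec.2.1 rfl
  · intro n
    exact (hstep n (F n)).choose_spec.2.1

/-- Open subsets of a kω-space are locally kω: every open neighbourhood `W` of a
point `x` of a kω-space `X` contains an open neighbourhood `U` of `x` which is a
kω-space in the subspace topology. -/
theorem exists_kOmega_open_nhd_subset
    {X : Type*} [TopologicalSpace X] (hX : IsKOmega X)
    {x : X} {W : Set X} (hW : IsOpen W) (hxW : x ∈ W) :
    ∃ U : Set X, IsOpen U ∧ x ∈ U ∧ U ⊆ W ∧ IsKOmega U := by
  obtain ⟨ht2, K, hKc, hKm, hKu, hKfin⟩ := hX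
  haveI := ht2
  obtain ⟨m, hxm⟩ : ∃ m, x ∈ K m :=
    Set.mem_iUnion.mp (hKu ▸ Set.mem_univ x)
  set L : ℕ → Set X := fun n => K (n + m) with hLdef
  have hLc : ∀ n, IsCompact (L n) := fun n => hKc (n + m)
  have hLm : Monotone L := fun a b hab => hKm (by omega)
  have hxL0 : x ∈ L 0 := by
    show x ∈ K (0 + m); rw [Nat.zero_add]; exact hxm
  -- finality with respect to the shifted sequence
  have hLfin : ∀ S : Set X, (∀ n, IsOpen ((Subtype.val ⁻¹' S) : Set (L n))) → IsOpen S := by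
    intro S hS
    rw [hKfin]
    intro j
    have hsub : K j ⊆ L j := hKm (by omega)
    exact (continuous_inclusion hsub).isOpen_preimage _ (hS j)
  obtain ⟨f, hxf0, hfopen, hfW, hflink⟩ := kw_seq hW L hLc hLm hxL0 hxW
  set C : ℕ → Set X := fun n => closure (f n ∩ L n) with hCdef
  have hCL : ∀ n, C n ⊆ L n := fun n =>
    closure_minimal Set.inter_subset_right (hLc n).isClosed
  have hCcomp : ∀ n, IsCompact (C n) := fun n =>
    (hLc n).of_isClosed_subset isClosed_closure (hCL n)
  have hsubC : ∀ n, f n ∩ L n ⊆ C n := fun n => subset_closure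
  have hCstep : ∀ n, C n ⊆ f (n + 1) ∩ L (n + 1) := fun n =>
    Set.subset_inter (hflink n) ((hCL n).trans (hLm (Nat.le_succ n)))
  have hmono : ∀ a b, a ≤ b → f a ∩ L a ⊆ f b ∩ L b := by
    intro a b hab
    induction hab with
    | refl => exact subset_rfl
    | step h ih => exact ih.trans ((hsubC _).trans (hCstep _))
  set U : Set X := ⋃ n, f n ∩ L n with hUdef
  have hCU : ∀ n, C n ⊆ U := fun n =>
    (hCstep n).trans (Set.subset_iUnion (fun k => f k ∩ L k) (n + 1))
  have hUopen : IsOpen U := by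
    apply hLfin
    intro n
    apply kw_relopen (G := ⋃ k, ⋃ (_ : n ≤ k), f k)
      (isOpen_iUnion fun k => isOpen_iUnion fun _ => hfopen k)
    apply Set.Subset.antisymm
    · rintro y ⟨hyU, hyL⟩
      obtain ⟨k, hk⟩ := Set.mem_iUnion.mp hyU
      have hk' : y ∈ f (max k n) ∩ L (max k n) := hmono k _ (le_max_left _ _) hk
      exact ⟨Set.mem_iUnion.mpr ⟨max k n,
        Set.mem_iUnion.mpr ⟨le_max_right _ _, hk'.1⟩⟩, hyL⟩
    · rintro y ⟨hyG, hyL⟩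
      obtain ⟨k, hk⟩ := Set.mem_iUnion.mp hyG
      obtain ⟨hnk, hyf⟩ := Set.mem_iUnion.mp hk
      exact ⟨Set.mem_iUnion.mpr ⟨k, hyf, hLm hnk hyL⟩, hyL⟩
  have hxU : x ∈ U := Set.mem_iUnion.mpr ⟨0, hxf0, hxL0⟩
  have hUW : U ⊆ W := by
    rintro y hy
    obtain ⟨k, hk⟩ := Set.mem_iUnion.mp hy
    exact hfW k (hsubC k hk)
  refine ⟨U, hUopen, hxU, hUW, inferInstance, fun n => Subtype.val ⁻¹' C n, ?_, ?_, ?_, ?_⟩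
  · -- compactness
    intro n
    rw [Subtype.isCompact_iff, Subtype.image_preimage_val,
      Set.inter_eq_self_of_subset_right (hCU n)]
    exact hCcomp n
  · -- monotone
    have hCmono : Monotone C :=
      monotone_nat_of_le_succ fun n => (hCstep n).trans (hsubC (n + 1))
    exact fun a b hab => Set.preimage_mono (hCmono hab)
  · -- covers
    ext ⟨y, hy⟩
    simp only [Set.mem_iUnion, Set.mem_preimage, Set.mem_univ, iff_true]
    obtain ⟨k, hk⟩ := Set.mem_iUnion.mp hy
    exact ⟨k, hsubC k hk⟩
  · -- finality for U
    intro A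
    constructor
    · intro hA n
      exact hA.preimage continuous_subtype_val
    · intro hA
      set A' : Set X := Subtype.val '' A with hA'def
      have hA'U : A' ⊆ U := by rintro y ⟨a, ha, rfl⟩; exact a.2
      have hVex : ∀ n, ∃ V : Set X, IsOpen V ∧ A' ∩ C n = V ∩ C n := by
        intro n
        have hind : Topology.IsInducing
            (fun d : (Subtype.val ⁻¹' C n : Set U) => ((d : U) : X)) :=
          Topology.IsInducing.subtypeVal.comp Topology.IsInducing.subtypeVal
        have hpre : (fun d : (Subtype.val ⁻¹' C n : Set U) => ((d : U) : X)) ⁻¹' A'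
            = Subtype.val ⁻¹' A := by
          ext d
          simp only [Set.mem_preimage, hA'def]
          exact ⟨fun ⟨a, ha, hEq⟩ => (Subtype.val_injective hEq) ▸ ha,
            fun h => ⟨d.1, h, rfl⟩⟩
        have hopen := hA n
        rw [← hpre, hind.isOpen_iff] at hopen
        obtain ⟨V, hVopen, hVpre⟩ := hopen
        refine ⟨V, hVopen, ?_⟩
        have hrange : Set.range
            (fun d : (Subtype.val ⁻¹' C n : Set U) => ((d : U) : X)) = C n := by
          ext y
          constructor
          · rintro ⟨d, rfl⟩; exact d.2
          · intro hy; exact ⟨⟨⟨y, hCU n hy⟩, hy⟩, rfl⟩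
        have himg := congrArg
          (Set.image (fun d : (Subtype.val ⁻¹' C n : Set U) => ((d : U) : X))) hVpre
        rw [Set.image_preimage_eq_inter_range, Set.image_preimage_eq_inter_range,
          hrange] at himg
        exact himg.symm
      choose V hVopen hVC using hVex
      have hA'open : IsOpen A' := by
        apply hLfin
        intro n
        apply kw_relopen (G := ⋃ k, ⋃ (_ : n ≤ k), V k ∩ f k)
          (isOpen_iUnion fun k => isOpen_iUnion fun _ => (hVopen k).inter (hfopen k))
        apply Set.Subset.antisymm
        · rintro y ⟨hyA, hyL⟩
          obtain ⟨k, hk⟩ := Set.mem_iUnion.mp (hA'U hyA)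
          have hk' : y ∈ f (max k n) ∩ L (max k n) := hmono k _ (le_max_left _ _) hk
          have hyC : y ∈ C (max k n) := hsubC _ hk'
          have hyV : y ∈ V (max k n) :=
            ((Set.ext_iff.mp (hVC (max k n)) y).mp ⟨hyA, hyC⟩).1
          exact ⟨Set.mem_iUnion.mpr ⟨max k n,
            Set.mem_iUnion.mpr ⟨le_max_right _ _, hyV, hk'.1⟩⟩, hyL⟩
        · rintro y ⟨hyG, hyL⟩
          obtain ⟨k, hk⟩ := Set.mem_iUnion.mp hyG
          obtain ⟨hnk, hyV, hyf⟩ := Set.mem_iUnion.mp hk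
          have hyC : y ∈ C k := hsubC k ⟨hyf, hLm hnk hyL⟩
          have hmem : y ∈ A' ∩ C k := (Set.ext_iff.mp (hVC k) y).mpr ⟨hyV, hyC⟩
          exact ⟨hmem.1, hyL⟩
      have hAeq : A = Subtype.val ⁻¹' A' :=
        (Set.preimage_image_eq A Subtype.val_injective).symm
      rw [hAeq]
      exact hA'open.preimage continuous_subtype_val
end

section
/- Let X be a locally kω Hausdorff space and Y ⊆ X a σ-compact subset. Then Y has an open neighbourhood U in X which is a kω-space in the subspace topology. -/
open Set Topology

section

variable {X : Type*} [TopologicalSpace X]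

theorem IsKOmegaSeq.continuousOn {Y : Type*} [TopologicalSpace Y] {V : Set X} {K : ℕ → Set V}
    (hK : IsKOmegaSeq K) {f : X → Y} (hf : ∀ n, ContinuousOn f (Subtype.val '' K n)) :
    ContinuousOn f V := by
  rw [continuousOn_iff_continuous_domRestrict, continuous_def]
  refine fun W hW => (hK.2.2.2 _).2 fun n => ?_
  have hfn := IsInducing.subtypeVal.continuousOn_image_iff.1 (hf n)
  exact (continuousOn_iff_continuous_domRestrict.1 hfn).isOpen_preimage W hW

theorem isKOmegaSeq_preimage_val {U : Set X} {L : ℕ → Set X} (hL : ∀ n, IsCompact (L n))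
    (hmono : Monotone L) (hcover : ⋃ n, L n = U)
    -- `Prop`-valued maps are continuous exactly on open sets, so this is coherence of `U` with `L`
    (hcoh : ∀ f : X → Prop, (∀ n, ContinuousOn f (L n)) → ContinuousOn f U) :
    IsKOmegaSeq fun n => (Subtype.val ⁻¹' L n : Set U) := by
  have hLU : ∀ n, L n ⊆ U := fun n => hcover ▸ subset_iUnion L n
  refine ⟨fun n => ?_, fun m n hmn => preimage_mono (hmono hmn), ?_,
    fun W => ⟨fun hW n => hW.preimage continuous_subtype_val, fun hW => ?_⟩⟩
  · rw [Subtype.isCompact_iff, Subtype.image_preimage_coe, inter_eq_right.2 (hLU n)]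
    exact hL n
  · rw [← preimage_iUnion, hcover, Subtype.coe_preimage_self]
  · set F : X → Prop := fun x => ∃ hx : x ∈ U, ⟨x, hx⟩ ∈ W
    have hF : ContinuousOn F U := hcoh F fun n => by
      rw [← inter_eq_right.2 (hLU n), ← Subtype.image_preimage_coe,
        IsInducing.subtypeVal.continuousOn_image_iff, continuousOn_iff_continuous_domRestrict,
        continuous_Prop]
      simpa [F, preimage] using hW n
    rw [continuousOn_iff_continuous_domRestrict, continuous_Prop] at hF
    simpa [F] using hF

theorem isKOmega_iUnion_of_isOpen [T2Space X] {ι : Type*} [Countable ι] {g : ι → Set X}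
    (hg : ∀ i, IsOpen (g i)) (hk : ∀ i, IsKOmega (g i)) : IsKOmega ↥(⋃ i, g i) := by
  obtain ⟨e, he⟩ := Countable.exists_injective_nat ι
  choose K hK using fun i => (hk i).2
  set M : ι → ℕ → Set X := fun i n => Subtype.val '' K i n
  set L : ℕ → Set X := fun n => ⋃ i ∈ e ⁻¹' Iic n, M i n
  have hML : ∀ i n, M i n ⊆ L (max (e i) n) := fun i n =>
    (image_mono ((hK i).2.1 (le_max_right _ _))).trans
      (subset_biUnion_of_mem (u := fun j => M j (max (e i) n)) (le_max_left (e i) n))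
  have hLg : ∀ n, L n ⊆ ⋃ i, g i := fun n =>
    iUnion₂_subset fun i _ => (Subtype.coe_image_subset _ _).trans (subset_iUnion g i)
  refine ⟨inferInstance, _,
    isKOmegaSeq_preimage_val (L := L) (fun n => ?_) (fun m n hmn => ?_) ?_ ?_⟩
  · exact ((finite_Iic n).preimage he.injOn).isCompact_biUnion fun i _ =>
      ((hK i).1 n).image continuous_subtype_val
  · exact biUnion_mono (preimage_mono (Iic_subset_Iic.2 hmn)) fun i _ =>
      image_mono ((hK i).2.1 hmn)
  · refine (iUnion_subset hLg).antisymm (iUnion_subset fun i x hx => ?_)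
    obtain ⟨n, hn⟩ := iUnion_eq_univ_iff.1 (hK i).2.2.1 ⟨x, hx⟩
    exact mem_iUnion.2 ⟨_, hML i n ⟨_, hn, rfl⟩⟩
  · exact fun f hf => (continuousOn_iUnion_iff_of_isOpen hg).2 fun i =>
      (hK i).continuousOn fun n => (hf _).mono (hML i n)

end

/-- In a locally kω space, every σ-compact subset has an open neighbourhood
which is a kω-space in the subspace topology. -/
theorem exists_kOmega_open_nhd_of_sigmaCompact_subset
    {X : Type*} [TopologicalSpace X] (hX : IsLocallyKOmega X)
    {Y : Set X} (C : ℕ → Set X) (hC : ∀ n, IsCompact (C n)) (hYC : Y = ⋃ n, C n) :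
    ∃ U : Set X, IsOpen U ∧ Y ⊆ U ∧ IsKOmega U := by
  obtain ⟨hT2, hloc⟩ := hX
  choose V hVo hxV hVk using hloc
  have hY : IsSigmaCompact Y := ⟨C, hC, hYC.symm⟩
  obtain ⟨T, hTc, hYT⟩ := hY.isLindelof.elim_countable_subcover V hVo
    fun x _ => mem_iUnion.2 ⟨x, hxV x⟩
  have := hTc.to_subtype
  refine ⟨⋃ x : T, V x, isOpen_iUnion fun x => hVo x, ?_,
    isKOmega_iUnion_of_isOpen (fun x => hVo x) fun x => hVk x⟩
  rwa [biUnion_eq_iUnion] at hYT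
end

section
/- Every topological quotient map q : X → Y between kω-spaces is compact-covering: for each compact K ⊆ Y there exists a compact L ⊆ X with K ⊆ q(L). -/
open Topology

namespace IsKOmegaSeq

variable {X : Type*} [TopologicalSpace X] {K : ℕ → Set X}

lemma isClosed_iff (hK : IsKOmegaSeq K) {C : Set X} :
    IsClosed C ↔ ∀ n, IsClosed ((Subtype.val ⁻¹' C) : Set (K n)) := by
  rw [← isOpen_compl_iff, hK.2.2.2]
  simp only [Set.preimage_compl, isOpen_compl_iff]

lemma isClosed_of_forall_finite_inter [T1Space X] (hK : IsKOmegaSeq K) {B : Set X}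
    (hB : ∀ n, (B ∩ K n).Finite) : IsClosed B := by
  refine hK.isClosed_iff.2 fun n => ?_
  have hpre : (Subtype.val ⁻¹' B : Set (K n)) = Subtype.val ⁻¹' (B ∩ K n) := by
    ext x; simp
  rw [hpre]
  exact (hB n).isClosed.preimage continuous_subtype_val

lemma exists_subset_of_isCompact [T1Space X] (hK : IsKOmegaSeq K) {S : Set X}
    (hS : IsCompact S) : ∃ n, S ⊆ K n := by
  by_contra! h
  choose y hyS hyK using fun n => Set.not_subset.mp (h n)
  have hlt : ∀ {i m}, y i ∈ K m → i < m := fun hi =>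
    lt_of_not_ge fun hle => hyK _ (hK.2.1 hle hi)
  set F : ℕ → Set X := fun n => y '' Set.Ici n
  have hF_closed : ∀ n, IsClosed (F n) := fun n =>
    hK.isClosed_of_forall_finite_inter fun m => ((Set.finite_Iio m).image y).subset <| by
      rintro _ ⟨⟨i, -, rfl⟩, hi⟩
      exact ⟨i, hlt hi, rfl⟩
  have hF_compact : IsCompact (F 0) :=
    hS.of_isClosed_subset (hF_closed 0) (by rintro _ ⟨i, -, rfl⟩; exact hyS i)
  obtain ⟨v, hv⟩ := IsCompact.nonempty_iInter_of_sequence_nonempty_isCompact_isClosed F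
    (fun n => Set.image_mono (Set.Ici_subset_Ici.2 n.le_succ))
    (fun n => ⟨y n, n, Set.self_mem_Ici, rfl⟩) hF_compact hF_closed
  obtain ⟨n, hn⟩ := Set.mem_iUnion.1 (hK.2.2.1 ▸ Set.mem_univ v)
  obtain ⟨i, hi, rfl⟩ := Set.mem_iInter.1 hv n
  exact (hlt hn).not_ge hi

lemma image_of_isQuotientMap {Y : Type*} [TopologicalSpace Y] (hK : IsKOmegaSeq K)
    {q : X → Y} (hq : IsQuotientMap q) : IsKOmegaSeq fun n => q '' K n := by
  refine ⟨fun n => (hK.1 n).image hq.continuous, fun _ _ hab => Set.image_mono (hK.2.1 hab),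
    by rw [← Set.image_iUnion, hK.2.2.1, Set.image_univ, hq.surjective.range_eq],
    fun U => ⟨fun hU _ => hU.preimage continuous_subtype_val, fun h => ?_⟩⟩
  rw [← hq.isOpen_preimage, hK.2.2.2]
  exact fun n => (h n).preimage
    ((hq.continuous.comp continuous_subtype_val).subtype_mk fun x => Set.mem_image_of_mem q x.2)

end IsKOmegaSeq

/-- Every quotient map between kω-spaces is compact-covering. -/
theorem isQuotientMap_compactCovering
    {X Y : Type*} [TopologicalSpace X] [TopologicalSpace Y]
    (hX : IsKOmega X) (hY : IsKOmega Y)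
    {q : X → Y} (hq : Topology.IsQuotientMap q) :
    ∀ K : Set Y, IsCompact K → ∃ L : Set X, IsCompact L ∧ K ⊆ q '' L := by
  obtain ⟨-, K, hK⟩ := hX
  have := hY.1
  intro S hS
  obtain ⟨n, hn⟩ := (hK.image_of_isQuotientMap hq).exists_subset_of_isCompact hS
  exact ⟨K n, hK.1 n, hn⟩
end

section
/- Let X₁ ⊆ X₂ ⊆ ⋯ be an ascending sequence of kω-spaces such that each inclusion Xₙ → Xₙ₊₁ is continuous. Then the final topology on X = ⋃ₙ Xₙ with respect to the inclusions Xₙ → X makes X a kω-space. -/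
open Set

private theorem sep_aux {Z : Type*} [TopologicalSpace Z] [NormalSpace Z]
    {A B : Set Z} (hA : IsClosed A) (hB : IsClosed B) (hAB : Disjoint A B) :
    ∃ U V : Set Z, IsOpen U ∧ IsOpen V ∧ A ⊆ U ∧ B ⊆ V ∧
      Disjoint (closure U) (closure V) := by
  obtain ⟨W1, W2, hW1, hW2, hAW, hBW, hWd⟩ := NormalSpace.normal A B hA hB hAB
  obtain ⟨U, hU, hAU, hUc⟩ := normal_exists_closure_subset hA hW1 hAW
  obtain ⟨V, hV, hBV, hVc⟩ := normal_exists_closure_subset hB hW2 hBW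
  exact ⟨U, V, hU, hV, hAU, hBV, Set.disjoint_of_subset hUc hVc hWd⟩

private theorem t2space_of_seq {X : Type*} [T : TopologicalSpace X] {D : ℕ → Type*}
    [∀ n, TopologicalSpace (D n)] [∀ n, CompactSpace (D n)] [∀ n, T2Space (D n)]
    (f : ∀ n, D n → X) (φ : ∀ n, D n → D (n + 1))
    (hf : ∀ n, Function.Injective (f n)) (hφc : ∀ n, Continuous (φ n))
    (hcomm : ∀ n d, f (n + 1) (φ n d) = f n d)
    (hcov : ∀ x : X, ∃ n d, f n d = x)
    (hO : ∀ W : Set X, (∀ n, IsOpen ((f n) ⁻¹' W)) → IsOpen W) :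
    T2Space X := by
  classical
  let Φ : ∀ {m n : ℕ}, m ≤ n → D m → D n := fun h d => Nat.leRecOn h (fun {k} => φ k) d
  have hΦ_self : ∀ (n) (d : D n), Φ (le_refl n) d = d := fun n d => Nat.leRecOn_self d
  have hΦ_succ : ∀ {m n : ℕ} (h : m ≤ n) {h' : m ≤ n + 1} (d : D m),
      Φ h' d = φ n (Φ h d) := by
    intro m n h h' d; exact Nat.leRecOn_succ h d
  have hΦf : ∀ {m n : ℕ} (h : m ≤ n) (d : D m), f n (Φ h d) = f m d := by
    intro m n h d
    induction n, h using Nat.le_induction with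
    | base => rw [hΦ_self]
    | succ n h ih => rw [hΦ_succ h d, hcomm, ih]
  have hΦcont : ∀ {m n : ℕ} (h : m ≤ n), Continuous (fun d => Φ h d) := by
    intro m n h
    induction n, h using Nat.le_induction with
    | base =>
      have : (fun d : D m => Φ (le_refl m) d) = id := funext (hΦ_self m)
      rw [this]; exact continuous_id
    | succ n h ih =>
      have : (fun d : D m => Φ (Nat.le_succ_of_le h) d) = fun d => φ n (Φ h d) :=
        funext fun d => hΦ_succ h d
      rw [this]; exact (hφc n).comp ih
  have hφinj : ∀ n, Function.Injective (φ n) := fun n a b hab =>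
    hf n (by rw [← hcomm n a, ← hcomm n b, hab])
  refine ⟨fun x y hxy => ?_⟩
  obtain ⟨n1, d1, hd1⟩ := hcov x
  obtain ⟨n2, d2, hd2⟩ := hcov y
  set N := max n1 n2 with hN
  set dx := Φ (le_max_left n1 n2) d1 with hdxd
  set dy := Φ (le_max_right n1 n2) d2 with hdyd
  have hdx : f N dx = x := by rw [hdxd, hΦf, hd1]
  have hdy : f N dy = y := by rw [hdyd, hΦf, hd2]
  have hne : dx ≠ dy := fun e => hxy (by rw [← hdx, ← hdy, e])
  -- invariant
  let Inv : ∀ k, Set (D (N + k)) × Set (D (N + k)) → Prop := fun k p =>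
    IsOpen p.1 ∧ IsOpen p.2 ∧ Φ (Nat.le_add_right N k) dx ∈ p.1 ∧
      Φ (Nat.le_add_right N k) dy ∈ p.2 ∧ Disjoint (closure p.1) (closure p.2)
  have base : ∃ p : Set (D (N + 0)) × Set (D (N + 0)), Inv 0 p := by
    obtain ⟨U, V, hU, hV, hAU, hBV, hd⟩ := sep_aux (isClosed_singleton (x := dx))
      (isClosed_singleton (x := dy)) ((Set.disjoint_singleton).2 hne)
    refine ⟨(U, V), hU, hV, ?_, ?_, hd⟩
    · rw [show Φ (Nat.le_add_right N 0) dx = dx from hΦ_self N dx]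
      exact hAU rfl
    · rw [show Φ (Nat.le_add_right N 0) dy = dy from hΦ_self N dy]
      exact hBV rfl
  have exstep : ∀ (k) (p : Set (D (N + k)) × Set (D (N + k))), Inv k p →
      ∃ q : Set (D (N + (k + 1))) × Set (D (N + (k + 1))), Inv (k + 1) q ∧
        φ (N + k) '' closure p.1 ⊆ q.1 ∧ φ (N + k) '' closure p.2 ⊆ q.2 := by
    intro k p hp
    obtain ⟨hU, hV, hxU, hyV, hUV⟩ := hp
    have hA : IsClosed (φ (N + k) '' closure p.1) :=
      (isClosed_closure.isCompact.image (hφc _)).isClosed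
    have hB : IsClosed (φ (N + k) '' closure p.2) :=
      (isClosed_closure.isCompact.image (hφc _)).isClosed
    obtain ⟨U', V', hU', hV', hAU', hBV', hd'⟩ :=
      sep_aux hA hB (Set.disjoint_image_of_injective (hφinj _) hUV)
    refine ⟨(U', V'), ⟨hU', hV', ?_, ?_, hd'⟩, hAU', hBV'⟩
    · rw [hΦ_succ (Nat.le_add_right N k) dx]
      exact hAU' ⟨_, subset_closure hxU, rfl⟩
    · rw [hΦ_succ (Nat.le_add_right N k) dy]
      exact hBV' ⟨_, subset_closure hyV, rfl⟩
  let step : ∀ (k) (p : {p // Inv k p}),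
      {q : Set (D (N + (k + 1))) × Set (D (N + (k + 1))) //
        Inv (k + 1) q ∧ φ (N + k) '' closure p.1.1 ⊆ q.1 ∧
          φ (N + k) '' closure p.1.2 ⊆ q.2} := fun k p =>
    ⟨(exstep k p.1 p.2).choose, (exstep k p.1 p.2).choose_spec⟩
  let seq : ∀ k, {p // Inv k p} := fun k =>
    Nat.rec ⟨base.choose, base.choose_spec⟩ (fun k ih => ⟨(step k ih).1, (step k ih).2.1⟩) k
  have link1 : ∀ k, φ (N + k) '' closure (seq k).1.1 ⊆ (seq (k + 1)).1.1 :=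
    fun k => (step k (seq k)).2.2.1
  have link2 : ∀ k, φ (N + k) '' closure (seq k).1.2 ⊆ (seq (k + 1)).1.2 :=
    fun k => (step k (seq k)).2.2.2
  set u : ∀ k, Set (D (N + k)) := fun k => (seq k).1.1 with hu
  set v : ∀ k, Set (D (N + k)) := fun k => (seq k).1.2 with hv
  have hinv : ∀ k, Inv k (u k, v k) := fun k => (seq k).2
  have imono1 : ∀ (w : ∀ k, Set (D (N + k))),
      (∀ k, φ (N + k) '' closure (w k) ⊆ w (k + 1)) →
      Monotone fun k => f (N + k) '' w k := by
    intro w hw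
    apply monotone_nat_of_le_succ
    intro k z hz
    obtain ⟨d, hd, rfl⟩ := hz
    exact ⟨φ (N + k) d, hw k ⟨d, subset_closure hd, rfl⟩, hcomm (N + k) d⟩
  have humono := imono1 u link1
  have hvmono := imono1 v link2
  -- openness of the unions
  have hopen : ∀ (w : ∀ k, Set (D (N + k))), (∀ k, IsOpen (w k)) →
      (Monotone fun k => f (N + k) '' w k) → IsOpen (⋃ k, f (N + k) '' w k) := by
    intro w hwopen hwmono
    apply hO
    intro m
    have key : (f m) ⁻¹' (⋃ k, f (N + k) '' w k)
        = ⋃ k, (f m) ⁻¹' (f (N + (k + m)) '' w (k + m)) := by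
      ext d
      simp only [Set.mem_preimage, Set.mem_iUnion]
      constructor
      · rintro ⟨k, hk⟩
        exact ⟨k, hwmono (Nat.le_add_right k m) hk⟩
      · rintro ⟨k, hk⟩
        exact ⟨k + m, hk⟩
    rw [key]
    apply isOpen_iUnion
    intro k
    have hm : m ≤ N + (k + m) := by omega
    have : (f m) ⁻¹' (f (N + (k + m)) '' w (k + m)) = (fun d => Φ hm d) ⁻¹' (w (k + m)) := by
      ext d
      simp only [Set.mem_preimage]
      constructor
      · rintro ⟨e, he, hde⟩
        have : e = Φ hm d := hf _ (by rw [hΦf, hde])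
        rwa [this] at he
      · intro h
        exact ⟨Φ hm d, h, hΦf hm d⟩
    rw [this]
    exact (hΦcont hm).isOpen_preimage _ (hwopen (k + m))
  refine ⟨⋃ k, f (N + k) '' u k, ⋃ k, f (N + k) '' v k,
    hopen u (fun k => (hinv k).1) humono, hopen v (fun k => (hinv k).2.1) hvmono,
    ?_, ?_, ?_⟩
  · exact Set.mem_iUnion.2 ⟨0, ⟨_, (hinv 0).2.2.1, by rw [hΦf, hdx]⟩⟩
  · exact Set.mem_iUnion.2 ⟨0, ⟨_, (hinv 0).2.2.2.1, by rw [hΦf, hdy]⟩⟩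
  · rw [Set.disjoint_left]
    rintro z hz1 hz2
    obtain ⟨k1, a, ha, rfl⟩ := by simpa only [Set.mem_iUnion] using hz1
    have hz2' : f (N + k1) a ∈ ⋃ k, f (N + k) '' v k := hz2
    obtain ⟨k2, b, hb, hab⟩ := by simpa only [Set.mem_iUnion] using hz2'
    set k := max k1 k2 with hk
    have h1 : f (N + k1) a ∈ f (N + k) '' u k := humono (le_max_left k1 k2) ⟨a, ha, rfl⟩
    have h2 : f (N + k1) a ∈ f (N + k) '' v k := hvmono (le_max_right k1 k2) ⟨b, hb, hab⟩
    obtain ⟨a', ha', haa⟩ := h1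
    obtain ⟨b', hb', hbb⟩ := h2
    have : a' = b' := hf _ (by rw [haa, hbb])
    exact Set.disjoint_left.1 (hinv k).2.2.2.2 (subset_closure ha')
      (subset_closure (this ▸ hb'))


/-- Let `X₁ ⊆ X₂ ⊆ ⋯` be an ascending sequence of subsets of `X` covering `X`,
each carrying a topology `t n` making it a kω-space, such that the inclusion
maps `Xₙ → Xₙ₊₁` are continuous. Then the final topology on `X` with respect to
the inclusions `Xₙ → X` makes `X` a kω-space. -/

theorem isKOmega_directLimit_of_kOmega
    {X : Type*} (S : ℕ → Set X) (hmono : Monotone S) (hcover : (⋃ n, S n) = Set.univ)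
    (t : ∀ n, TopologicalSpace (S n))
    (hincl : ∀ n, @Continuous _ _ (t n) (t (n + 1)) (Set.inclusion (hmono (Nat.le_succ n))))
    (hkom : ∀ n, @IsKOmega (S n) (t n)) :
    @IsKOmega X (⨆ n, TopologicalSpace.coinduced (Subtype.val) (t n)) := by
  classical
  letI T : TopologicalSpace X := ⨆ n, TopologicalSpace.coinduced (Subtype.val) (t n)
  show @IsKOmega X T
  have hT2n : ∀ n, @T2Space (S n) (t n) := fun n => (hkom n).1
  choose K hK using fun n => (hkom n).2
  have hKc : ∀ n m, @IsCompact _ (t n) (K n m) := fun n => (hK n).1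
  have hKm : ∀ n, Monotone (K n) := fun n => (hK n).2.1
  have hKcov : ∀ n, (⋃ m, K n m) = Set.univ := fun n => (hK n).2.2.1
  have hKfin := fun n => (hK n).2.2.2
  have hvalc : ∀ n, @Continuous _ _ (t n) T Subtype.val := fun n =>
    continuous_iff_coinduced_le.2
      (le_iSup (fun n => TopologicalSpace.coinduced (Subtype.val) (t n)) n)
  have hWiff : ∀ W : Set X, IsOpen W ↔ ∀ n, @IsOpen _ (t n) (Subtype.val ⁻¹' W) := fun W =>
    Iff.trans isOpen_iSup_iff (forall_congr' fun n => isOpen_coinduced)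
  have contInc : ∀ {m n : ℕ} (h : m ≤ n),
      @Continuous _ _ (t m) (t n) (Set.inclusion (hmono h)) := by
    intro m n h
    induction n, h using Nat.le_induction with
    | base =>
      have : Set.inclusion (hmono (le_refl m)) = (id : ↥(S m) → ↥(S m)) :=
        funext fun x => Subtype.ext rfl
      rw [this]; exact continuous_id
    | succ n h ih =>
      have : Set.inclusion (hmono (Nat.le_succ_of_le h))
          = (Set.inclusion (hmono (Nat.le_succ n))) ∘ (Set.inclusion (hmono h)) :=
        funext fun x => Subtype.ext rfl
      rw [this]; exact Continuous.comp (hincl n) ih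
  let D : ∀ n, Set ↥(S n) := fun n =>
    ⋃ i : Fin (n + 1), Set.inclusion (hmono (Nat.lt_succ_iff.mp i.2)) '' K i n
  have hDc : ∀ n, @IsCompact _ (t n) (D n) := fun n => by
    letI := t n
    exact isCompact_iUnion fun i => (hKc i n).image (contInc (Nat.lt_succ_iff.mp i.2))
  have hDmono : ∀ (n) (d : ↥(S n)), d ∈ D n →
      Set.inclusion (hmono (Nat.le_succ n)) d ∈ D (n + 1) := by
    intro n d hd
    obtain ⟨i, hi⟩ := Set.mem_iUnion.1 hd
    obtain ⟨k, hk, hkd⟩ := hi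
    refine Set.mem_iUnion.2 ⟨⟨i.1, by omega⟩, k, hKm i (Nat.le_succ n) hk, ?_⟩
    rw [← hkd]
  have hDcov : ∀ x : X, ∃ (n : ℕ) (d : ↥(D n)), ((d : ↥(S n)) : X) = x := by
    intro x
    have hx : x ∈ ⋃ n, S n := hcover ▸ Set.mem_univ x
    obtain ⟨n, hn⟩ := Set.mem_iUnion.1 hx
    have hx2 : (⟨x, hn⟩ : ↥(S n)) ∈ ⋃ m, K n m := (hKcov n) ▸ Set.mem_univ _
    obtain ⟨m, hm⟩ := Set.mem_iUnion.1 hx2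
    refine ⟨max n m, ⟨Set.inclusion (hmono (le_max_left n m)) ⟨x, hn⟩, ?_⟩, rfl⟩
    exact Set.mem_iUnion.2
      ⟨⟨n, by omega⟩, ⟨x, hn⟩, hKm n (le_max_right n m) hm, rfl⟩
  let τ : ∀ n, TopologicalSpace ↥(D n) := fun n =>
    TopologicalSpace.induced Subtype.val (t n)
  have hcomp : ∀ n, @CompactSpace _ (τ n) := fun n => by
    letI := t n
    exact isCompact_iff_compactSpace.mp (hDc n)
  have hT2D : ∀ n, @T2Space _ (τ n) := fun n => by
    letI := t n
    haveI := hT2n n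
    exact inferInstance
  let fD : ∀ n, ↥(D n) → X := fun n d => ((d : ↥(S n)) : X)
  have hfDinj : ∀ n, Function.Injective (fD n) := fun n a b h =>
    Subtype.ext (Subtype.ext h)
  have hfDc : ∀ n, @Continuous _ _ (τ n) T (fD n) := fun n => by
    letI := t n
    exact (hvalc n).comp continuous_subtype_val
  let φD : ∀ n, ↥(D n) → ↥(D (n + 1)) := fun n d =>
    ⟨Set.inclusion (hmono (Nat.le_succ n)) d.1, hDmono n d.1 d.2⟩
  have hφDc : ∀ n, @Continuous _ _ (τ n) (τ (n + 1)) (φD n) := fun n => by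
    letI := t n
    letI := t (n + 1)
    exact Continuous.subtype_mk
      ((contInc (Nat.le_succ n)).comp continuous_subtype_val) _
  have hOiff : ∀ W : Set X, (∀ n, @IsOpen _ (τ n) (fD n ⁻¹' W)) → IsOpen W := by
    intro W hW
    rw [hWiff]
    intro n
    rw [hKfin n]
    intro p
    letI := t n
    have hmem : ∀ k : ↥(K n p), Set.inclusion (hmono (le_max_left n p)) k.1 ∈ D (max n p) := by
      intro k
      exact Set.mem_iUnion.2 ⟨⟨n, by omega⟩, k.1, hKm n (le_max_right n p) k.2, rfl⟩
    let ψ : ↥(K n p) → ↥(D (max n p)) := fun k =>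
      ⟨Set.inclusion (hmono (le_max_left n p)) k.1, hmem k⟩
    have hψc : @Continuous _ _ _ (τ (max n p)) ψ := by
      letI := t (max n p)
      exact Continuous.subtype_mk
        ((contInc (le_max_left n p)).comp continuous_subtype_val) _
    have heq : (Subtype.val ⁻¹' (Subtype.val ⁻¹' W) : Set ↥(K n p))
        = ψ ⁻¹' (fD (max n p) ⁻¹' W) := rfl
    rw [heq]
    exact hψc.isOpen_preimage _ (hW (max n p))
  haveI hT2X : T2Space X :=
    @t2space_of_seq X T _ τ hcomp hT2D fD φD hfDinj hφDc (fun n d => rfl) hDcov hOiff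
  refine ⟨hT2X, fun n => Subtype.val '' (D n), fun n => (hDc n).image (hvalc n), ?_, ?_, ?_⟩
  · apply monotone_nat_of_le_succ
    rintro n z ⟨d, hd, rfl⟩
    exact ⟨Set.inclusion (hmono (Nat.le_succ n)) d, hDmono n d hd, rfl⟩
  · ext x
    simp only [Set.mem_univ, iff_true, Set.mem_iUnion]
    obtain ⟨n, d, hd⟩ := hDcov x
    exact ⟨n, d.1, d.2, hd⟩
  · intro U
    constructor
    · intro h n
      exact h.preimage continuous_subtype_val
    · intro h
      apply hOiff
      intro n
      have heq : fD n ⁻¹' U = (fun d : ↥(D n) =>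
          (⟨fD n d, ⟨d.1, d.2, rfl⟩⟩ : ↥(Subtype.val '' D n))) ⁻¹' (Subtype.val ⁻¹' U) := rfl
      rw [heq]
      exact (h n).preimage (Continuous.subtype_mk (hfDc n) _)
end

section
/- Let X₁ ⊆ X₂ ⊆ ⋯ and Y₁ ⊆ Y₂ ⊆ ⋯ be ascending sequences of locally kω spaces with continuous inclusion maps, and let X, Y be their unions with the direct limit topologies. Then the natural continuous bijection lim→(Xₙ × Yₙ) → X × Y is a homeomorphism, i.e., the direct limit topology on ⋃ₙ(Xₙ × Yₙ) coincides with the product topology on X × Y. -/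
/-!
Around a point `a` of level `S 0`, the direct limit `A` contains an open set which is the union
of compact sets `C n ⊆ S n` and carries the final topology with respect to them (traces being
taken in the finer topologies of the levels): choose open kω neighbourhoods `Ωₙ ⊆ S n` that
ascend, each containing the image of the previous one, and take a diagonal of their
exhaustions. Given `W` open for the final topology of the `S n × T n` and `(a, b) ∈ W`, the tube
lemma in the compact Hausdorff spaces `C n`, `D n` grows compact sets `E n ⊆ C n`, `F n ⊆ D n`
with `E n × F n ⊆ W`, each lying in the relative interior of the next. The unions of the `E n`
and of the `F n` are then open, and their product lies in `W`. Starting from a common level `N`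
with `a ∈ S N`, `b ∈ T N` reduces the general case to this one.
-/

open TopologicalSpace Set Topology Set.Notation

theorem Set.coe_mem_image_iff_inclusion_mem {α : Type*} {s t : Set α} (h : s ⊆ t) {x : s}
    {P : Set t} : (x : α) ∈ ((↑) : t → α) '' P ↔ inclusion h x ∈ P :=
  Subtype.val_injective.mem_set_image (a := inclusion h x)

theorem Set.image_inclusion {α : Type*} {s t : Set α} (h : s ⊆ t) (P : Set s) :
    inclusion h '' P = t ↓∩ ((↑) '' P) := by
  ext x
  exact ⟨fun ⟨y, hy, hyx⟩ => ⟨y, hy, congrArg Subtype.val hyx⟩,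
    fun ⟨y, hy, hyx⟩ => ⟨y, hy, Subtype.ext hyx⟩⟩

theorem exists_seq_of_forall_exists_succ {P : ℕ → Type*} (good : ∀ k, P k → Prop)
    (R : ∀ k, P k → P (k + 1) → Prop) (x₀ : P 0) (h₀ : good 0 x₀)
    (step : ∀ k x, good k x → ∃ y, good (k + 1) y ∧ R k x y) :
    ∃ f : ∀ k, P k, f 0 = x₀ ∧ ∀ k, good k (f k) ∧ R k (f k) (f (k + 1)) := by
  choose next hnext using step
  let f : ∀ k, {x : P k // good k x} := fun k =>
    Nat.rec ⟨x₀, h₀⟩ (fun k x => ⟨next k x.1 x.2, (hnext k x.1 x.2).1⟩) k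
  exact ⟨fun k => (f k).1, rfl, fun k => ⟨(f k).2, (hnext k _ _).2⟩⟩

section Topology

variable {X Y : Type*} [TopologicalSpace X] [TopologicalSpace Y]

/-- `Ω` is an open subset of `X` which is a kω-space with compact exhaustion `K`, phrased
without passing to the subspace `Ω`. -/
structure IsOpenKOmegaExhaustion (Ω : Set X) (K : ℕ → Set X) : Prop where
  isOpen : IsOpen Ω
  isCompact : ∀ m, IsCompact (K m)
  mono : Monotone K
  iUnion_eq : ⋃ m, K m = Ω
  isOpen_of_isOpen_preimage : ∀ Z ⊆ Ω, (∀ m, IsOpen (K m ↓∩ Z)) → IsOpen Z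

namespace IsOpenKOmegaExhaustion

theorem subset {Ω : Set X} {K : ℕ → Set X} (h : IsOpenKOmegaExhaustion Ω K) (m : ℕ) :
    K m ⊆ Ω :=
  h.iUnion_eq ▸ subset_iUnion K m

theorem isSigmaCompact {Ω : Set X} {K : ℕ → Set X} (h : IsOpenKOmegaExhaustion Ω K) :
    IsSigmaCompact Ω :=
  ⟨K, h.isCompact, h.iUnion_eq⟩

theorem iUnion {ι : Type*} [Countable ι] {Ω : ι → Set X} {K : ι → ℕ → Set X}
    (h : ∀ i, IsOpenKOmegaExhaustion (Ω i) (K i)) :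
    ∃ K', IsOpenKOmegaExhaustion (⋃ i, Ω i) K' := by
  obtain ⟨e, he⟩ := Countable.exists_injective_nat ι
  set K' : ℕ → Set X := fun m => ⋃ (j) (_ : e j ≤ m), K j m
  have hK : ∀ i m, K i m ⊆ K' (max (e i) m) := fun i m x hx =>
    mem_iUnion₂.2 ⟨i, le_max_left _ _, (h i).mono (le_max_right _ _) hx⟩
  refine ⟨K', isOpen_iUnion fun i => (h i).isOpen,
    fun m => ((finite_le_nat m).preimage he.injOn).isCompact_biUnion fun j _ => (h j).isCompact m,
    fun m m' hm => biUnion_mono (fun j hj => le_trans hj hm) fun j _ => (h j).mono hm, ?_, ?_⟩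
  · refine subset_antisymm (iUnion₂_subset fun m j => iUnion_subset fun _ =>
      ((h j).subset m).trans (subset_iUnion Ω j)) (iUnion_subset fun i => ?_)
    rw [← (h i).iUnion_eq]
    exact iUnion_subset fun m => (hK i m).trans (subset_iUnion K' _)
  · intro Z hZ htrace
    have hZi : ∀ i, IsOpen (Z ∩ Ω i) := fun i =>
      (h i).isOpen_of_isOpen_preimage _ inter_subset_right fun m => by
        convert (htrace _).preimage (continuous_inclusion (hK i m)) using 1
        ext x
        simpa using fun _ => (h i).subset m x.2
    rw [← inter_eq_left.2 hZ, inter_iUnion]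
    exact isOpen_iUnion hZi

end IsOpenKOmegaExhaustion

namespace IsLocallyKOmega

theorem exists_mem_isOpenKOmegaExhaustion (h : IsLocallyKOmega X) (x : X) :
    ∃ Ω K, x ∈ Ω ∧ IsOpenKOmegaExhaustion Ω K := by
  obtain ⟨U, hU, hxU, -, K, hK, hKmono, hKcover, hKfinal⟩ := h.2 x
  refine ⟨U, fun m => (↑) '' K m, hxU, hU, fun m => (hK m).image continuous_subtype_val,
    fun m m' hm => image_mono (hKmono hm), by
      rw [← image_iUnion, hKcover, image_univ, Subtype.range_coe], fun Z hZ htrace => ?_⟩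
  rw [hU.isOpenEmbedding_subtypeVal.isOpen_iff_preimage_isOpen (by simpa using hZ), hKfinal]
  exact fun m => (htrace m).preimage
    (continuous_subtype_val.subtype_map fun y hy => mem_image_of_mem _ hy)

theorem exists_superset_isOpenKOmegaExhaustion (h : IsLocallyKOmega X) {s : Set X}
    (hs : IsSigmaCompact s) : ∃ Ω K, s ⊆ Ω ∧ IsOpenKOmegaExhaustion Ω K := by
  choose Ω K hmem hΩ using h.exists_mem_isOpenKOmegaExhaustion
  obtain ⟨r, hr, hsr⟩ := hs.isLindelof.elim_countable_subcover Ω (fun x => (hΩ x).isOpen)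
    fun x _ => mem_iUnion.2 ⟨x, hmem x⟩
  have := hr.to_subtype
  obtain ⟨K', hK'⟩ := IsOpenKOmegaExhaustion.iUnion fun x : r => hΩ x
  exact ⟨_, K', by simpa [iUnion_subtype] using hsr, hK'⟩

end IsLocallyKOmega

theorem interior_union_compl_inter_subset (C E : Set X) : interior (E ∪ Cᶜ) ∩ C ⊆ E :=
  fun _ hx => (interior_subset hx.1).resolve_right (not_not_intro hx.2)

theorem IsCompact.exists_compact_between_within [T2Space X] {C K O : Set X} (hC : IsCompact C)
    (hK : IsCompact K) (hO : IsOpen O) (hKO : K ⊆ O) :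
    ∃ E, IsCompact E ∧ E ⊆ C ∩ O ∧ K ⊆ interior (E ∪ Cᶜ) := by
  obtain ⟨U, V, hU, hV, hKU, hCV, hUV⟩ := SeparatedNhds.of_isCompact_isCompact hK (hC.diff hO)
    (disjoint_left.2 fun x hxK hxCO => hxCO.2 (hKO hxK))
  refine ⟨C \ V, hC.diff hV, fun x hx => ⟨hx.1, by_contra fun hxO => hx.2 (hCV ⟨hx.1, hxO⟩)⟩,
    hKU.trans (interior_maximal (fun x hxU => ?_) hU)⟩
  by_cases hxC : x ∈ C
  · exact Or.inl ⟨hxC, disjoint_left.1 hUV hxU⟩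
  · exact Or.inr hxC

theorem exists_compact_prod_subset_between_within [T2Space X] [T2Space Y] {C : Set X}
    {D : Set Y} (hC : IsCompact C) (hD : IsCompact D) {W : Set (X × Y)} (hW : IsOpen W)
    {E : Set X} {F : Set Y} (hE : IsCompact E) (hF : IsCompact F) (hEF : E ×ˢ F ⊆ W) :
    ∃ E' F', (IsCompact E' ∧ E' ⊆ C ∧ IsCompact F' ∧ F' ⊆ D ∧ E' ×ˢ F' ⊆ W) ∧
      E ⊆ interior (E' ∪ Cᶜ) ∧ F ⊆ interior (F' ∪ Dᶜ) := by
  obtain ⟨U, V, hU, hV, hEU, hFV, hUV⟩ := generalized_tube_lemma hE hF hW hEF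
  obtain ⟨E', hE', hE'CU, hEE'⟩ := hC.exists_compact_between_within hE hU hEU
  obtain ⟨F', hF', hF'DV, hFF'⟩ := hD.exists_compact_between_within hF hV hFV
  exact ⟨E', F', ⟨hE', fun x hx => (hE'CU hx).1, hF', fun y hy => (hF'DV hy).1,
    (prod_mono (fun x hx => (hE'CU hx).2) fun y hy => (hF'DV hy).2).trans hUV⟩, hEE', hFF'⟩

end Topology

section DirectLimit

variable {A : Type*} (S : ℕ → Set A) [∀ n, TopologicalSpace (S n)]

structure HasContinuousInclusions : Prop where
  mono : Monotone S
  continuous_inclusion : ∀ n, Continuous (inclusion (mono (Nat.le_succ n)))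

abbrev directLimitTopology : TopologicalSpace A :=
  ⨆ n, coinduced ((↑) : S n → A) inferInstance

/-- Compact sets `C n ⊆ S n`, ascending in `A`, whose union is open in the direct limit and
carries the final topology with respect to them, traces being taken in the level topologies. -/
structure IsKOmegaChain (C : ∀ n, Set (S n)) : Prop where
  isCompact : ∀ n, IsCompact (C n)
  mono : Monotone fun n => ((↑) : S n → A) '' C n
  isOpen_of_isOpen_preimage : ∀ Z ⊆ ⋃ n, ((↑) : S n → A) '' C n,
    (∀ n, IsOpen (C n ↓∩ (S n ↓∩ Z))) → IsOpen[directLimitTopology S] Z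

def diagonalChain (K : ∀ n, ℕ → Set (S n)) (m₀ n : ℕ) : Set (S n) :=
  S n ↓∩ ⋃ i ≤ n, (↑) '' K i (m₀ + n)

variable {S}

theorem isOpen_directLimitTopology_iff {U : Set A} :
    IsOpen[directLimitTopology S] U ↔ ∀ n, IsOpen (S n ↓∩ U) := by
  simp only [isOpen_iSup_iff, isOpen_coinduced]

theorem continuous_val_directLimitTopology (n : ℕ) :
    Continuous[_, directLimitTopology S] ((↑) : S n → A) :=
  continuous_iff_coinduced_le.2 (le_iSup (fun n => coinduced ((↑) : S n → A) inferInstance) n)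

namespace HasContinuousInclusions

theorem continuous_inclusion_of_le (hS : HasContinuousInclusions S) {n m : ℕ} (h : n ≤ m) :
    Continuous (inclusion (hS.mono h)) := by
  induction m, h using Nat.le_induction with
  | base => exact continuous_id
  | succ m _ ih => exact (hS.continuous_inclusion m).comp ih

theorem shift (hS : HasContinuousInclusions S) (N : ℕ) :
    HasContinuousInclusions fun n => S (N + n) :=
  ⟨fun _ _ h => hS.mono (Nat.add_le_add_left h N), fun n => hS.continuous_inclusion (N + n)⟩

theorem directLimitTopology_shift (hS : HasContinuousInclusions S) (N : ℕ) :
    directLimitTopology (fun n => S (N + n)) = directLimitTopology S := by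
  refine TopologicalSpace.ext_iff.2 fun U => ?_
  simp only [isOpen_directLimitTopology_iff]
  exact ⟨fun h n => (h n).preimage (hS.continuous_inclusion_of_le (Nat.le_add_left n N)),
    fun h n => h (N + n)⟩

theorem isOpen_iUnion (hS : HasContinuousInclusions S) {Z : ℕ → Set A} (hZ : Monotone Z)
    (h : ∀ n, IsOpen (S n ↓∩ Z n)) : IsOpen[directLimitTopology S] (⋃ n, Z n) := by
  rw [isOpen_directLimitTopology_iff]
  intro n
  have : S n ↓∩ ⋃ k, Z k =
      ⋃ k, inclusion (hS.mono (Nat.le_add_right n k)) ⁻¹' (S (n + k) ↓∩ Z (n + k)) := by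
    ext x
    simp only [preimage_iUnion, mem_iUnion, mem_preimage]
    exact ⟨fun ⟨k, hk⟩ => ⟨k, hZ (Nat.le_add_left k n) hk⟩, fun ⟨k, hk⟩ => ⟨_, hk⟩⟩
  rw [this]
  exact _root_.isOpen_iUnion fun k =>
    (h (n + k)).preimage (hS.continuous_inclusion_of_le (Nat.le_add_right n k))

theorem exists_seq_isOpenKOmegaExhaustion (hS : HasContinuousInclusions S)
    (hSlk : ∀ n, IsLocallyKOmega (S n)) (a : S 0) :
    ∃ (Ω : ∀ n, Set (S n)) (K : ∀ n, ℕ → Set (S n)),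
      (∀ n, IsOpenKOmegaExhaustion (Ω n) (K n)) ∧
      Monotone (fun n => ((↑) : S n → A) '' Ω n) ∧ a ∈ Ω 0 := by
  obtain ⟨Ω₀, K₀, haΩ₀, hΩ₀⟩ := (hSlk 0).exists_mem_isOpenKOmegaExhaustion a
  have step : ∀ k (p : Set (S k) × (ℕ → Set (S k))), IsOpenKOmegaExhaustion p.1 p.2 →
      ∃ q : Set (S (k + 1)) × (ℕ → Set (S (k + 1))), IsOpenKOmegaExhaustion q.1 q.2 ∧
        ((↑) : S k → A) '' p.1 ⊆ (↑) '' q.1 := by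
    rintro k ⟨Ω, K⟩ hΩ
    obtain ⟨Ω', K', hsub, hΩ'⟩ := (hSlk (k + 1)).exists_superset_isOpenKOmegaExhaustion
      (hΩ.isSigmaCompact.image (hS.continuous_inclusion k))
    refine ⟨(Ω', K'), hΩ', ?_⟩
    rintro _ ⟨x, hx, rfl⟩
    exact (coe_mem_image_iff_inclusion_mem _).2 (hsub (mem_image_of_mem _ hx))
  obtain ⟨f, hf0, hf⟩ := exists_seq_of_forall_exists_succ _ _ (Ω₀, K₀) hΩ₀ step
  exact ⟨fun n => (f n).1, fun n => (f n).2, fun n => (hf n).1,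
    monotone_nat_of_le_succ fun n => (hf n).2, by simpa only [hf0] using haΩ₀⟩

theorem image_diagonalChain (hS : HasContinuousInclusions S) (K : ∀ n, ℕ → Set (S n))
    (m₀ n : ℕ) : ((↑) : S n → A) '' diagonalChain S K m₀ n = ⋃ i ≤ n, (↑) '' K i (m₀ + n) := by
  rw [diagonalChain, Subtype.image_preimage_coe, inter_eq_right]
  exact iUnion₂_subset fun i hi => (image_subset_range _ _).trans
    (Subtype.range_coe.trans_subset (hS.mono hi))

theorem isKOmegaChain_diagonalChain (hS : HasContinuousInclusions S)
    {Ω : ∀ n, Set (S n)} {K : ∀ n, ℕ → Set (S n)}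
    (hK : ∀ n, IsOpenKOmegaExhaustion (Ω n) (K n))
    (hΩ : Monotone fun n => ((↑) : S n → A) '' Ω n) (m₀ : ℕ) :
    IsKOmegaChain S (diagonalChain S K m₀) where
  isCompact n := by
    rw [diagonalChain, preimage_iUnion₂]
    refine (finite_Iic n).isCompact_biUnion fun i hi => ?_
    rw [← image_inclusion (hS.mono hi)]
    exact ((hK i).isCompact _).image (hS.continuous_inclusion_of_le hi)
  mono n m h := by
    simp only [hS.image_diagonalChain]
    exact biUnion_mono (fun i hi => le_trans hi h) fun i _ => image_mono ((hK i).mono (by omega))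
  isOpen_of_isOpen_preimage Z hZ htrace := by
    -- `K j m` is contained in the diagonal set of level `j + m`
    have hZΩ : ∀ j, IsOpen ((S j ↓∩ Z) ∩ Ω j) := fun j =>
      (hK j).isOpen_of_isOpen_preimage _ inter_subset_right fun m => by
        have hjm : j ≤ j + m := Nat.le_add_right j m
        have hmaps : MapsTo (inclusion (hS.mono hjm)) (K j m) (diagonalChain S K m₀ (j + m)) :=
          fun x hx => mem_iUnion₂.2
            ⟨j, hjm, mem_image_of_mem _ ((hK j).mono (by omega : m ≤ m₀ + (j + m)) hx)⟩
        convert (htrace (j + m)).preimage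
          ((hS.continuous_inclusion_of_le hjm).restrict hmaps) using 1
        ext x
        simpa using fun _ => (hK j).subset m x.2
    have hZ' : Z = ⋃ j, Z ∩ (↑) '' Ω j := by
      refine (inter_eq_left.2 fun z hz => ?_).symm.trans (inter_iUnion _ _)
      obtain ⟨n, hn⟩ := mem_iUnion.1 (hZ hz)
      rw [hS.image_diagonalChain] at hn
      obtain ⟨i, hi, hzi⟩ := mem_iUnion₂.1 hn
      exact mem_iUnion.2 ⟨n, hΩ hi (image_mono ((hK i).subset _) hzi)⟩
    rw [hZ']
    refine hS.isOpen_iUnion (fun j k h => inter_subset_inter_right _ (hΩ h)) fun j => ?_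
    rw [preimage_inter, Subtype.val_injective.preimage_image]
    exact hZΩ j

theorem exists_isKOmegaChain (hS : HasContinuousInclusions S)
    (hSlk : ∀ n, IsLocallyKOmega (S n)) (a : S 0) : ∃ C, IsKOmegaChain S C ∧ a ∈ C 0 := by
  obtain ⟨Ω, K, hK, hΩ, ha⟩ := hS.exists_seq_isOpenKOmegaExhaustion hSlk a
  obtain ⟨m₀, hm₀⟩ := mem_iUnion.1 ((hK 0).iUnion_eq.symm ▸ ha)
  exact ⟨_, hS.isKOmegaChain_diagonalChain hK hΩ m₀,
    mem_iUnion₂.2 ⟨0, le_rfl, mem_image_of_mem _ hm₀⟩⟩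

end HasContinuousInclusions

namespace IsKOmegaChain

variable {C : ∀ n, Set (S n)}

theorem isOpen_iUnion (hC : IsKOmegaChain S C) (hS : HasContinuousInclusions S)
    {O : ∀ n, Set (S n)} (hO : ∀ n, IsOpen (O n))
    (hmono : Monotone fun n => ((↑) : S n → A) '' (O n ∩ C n)) :
    IsOpen[directLimitTopology S] (⋃ n, (↑) '' (O n ∩ C n)) := by
  refine hC.isOpen_of_isOpen_preimage _ (iUnion_mono fun n => image_mono inter_subset_right)
    fun n => ?_
  have : C n ↓∩ (S n ↓∩ ⋃ k, (↑) '' (O k ∩ C k)) =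
      C n ↓∩ ⋃ k, inclusion (hS.mono (Nat.le_add_right n k)) ⁻¹' O (n + k) := by
    ext ⟨x, hx⟩
    simp only [preimage_iUnion, mem_iUnion, mem_preimage]
    constructor
    · rintro ⟨k, hk⟩
      exact ⟨k, ((coe_mem_image_iff_inclusion_mem _).1 (hmono (Nat.le_add_left k n) hk)).1⟩
    · rintro ⟨k, hk⟩
      have hxC := (coe_mem_image_iff_inclusion_mem (hS.mono (Nat.le_add_right n k))).1
        (hC.mono (Nat.le_add_right n k) (mem_image_of_mem _ hx))
      exact ⟨n + k, (coe_mem_image_iff_inclusion_mem _).2 ⟨hk, hxC⟩⟩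
  rw [this]
  exact (_root_.isOpen_iUnion fun k => (hO _).preimage
    (hS.continuous_inclusion_of_le (Nat.le_add_right n k))).preimage continuous_subtype_val

theorem isOpen_iUnion_of_subset_interior (hC : IsKOmegaChain S C)
    (hS : HasContinuousInclusions S) {E : ∀ n, Set (S n)} (hEC : ∀ n, E n ⊆ C n)
    (hE : ∀ n, inclusion (hS.mono (Nat.le_succ n)) '' E n ⊆ interior (E (n + 1) ∪ (C (n + 1))ᶜ)) :
    Monotone (fun n => ((↑) : S n → A) '' E n) ∧
      IsOpen[directLimitTopology S] (⋃ n, (↑) '' E n) := by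
  set U := fun n => interior (E n ∪ (C n)ᶜ) ∩ C n
  have hUE : ∀ n, U n ⊆ E n := fun n => interior_union_compl_inter_subset (C n) (E n)
  have hEU : ∀ n, ((↑) : S n → A) '' E n ⊆ (↑) '' U (n + 1) := by
    rintro n _ ⟨x, hx, rfl⟩
    refine (coe_mem_image_iff_inclusion_mem (hS.mono (Nat.le_succ n))).2
      ⟨hE n (mem_image_of_mem _ hx), ?_⟩
    exact (coe_mem_image_iff_inclusion_mem _).1
      (hC.mono (Nat.le_succ n) (mem_image_of_mem _ (hEC n hx)))
  refine ⟨monotone_nat_of_le_succ fun n => (hEU n).trans (image_mono (hUE _)), ?_⟩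
  have : ⋃ n, ((↑) : S n → A) '' E n = ⋃ n, (↑) '' U n :=
    subset_antisymm (iUnion_subset fun n => (hEU n).trans
      (subset_iUnion (fun n => ((↑) : S n → A) '' U n) (n + 1)))
      (iUnion_mono fun n => image_mono (hUE n))
  rw [this]
  exact hC.isOpen_iUnion hS (fun _ => isOpen_interior)
    (monotone_nat_of_le_succ fun n => (image_mono (hUE n)).trans (hEU n))

theorem exists_isOpen_prod_subset {B : Type*} {T : ℕ → Set B} [∀ n, TopologicalSpace (T n)]
    [∀ n, T2Space (S n)] [∀ n, T2Space (T n)] {D : ∀ n, Set (T n)} (hC : IsKOmegaChain S C)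
    (hD : IsKOmegaChain T D) (hS : HasContinuousInclusions S) (hT : HasContinuousInclusions T)
    {W : Set (A × B)} (hW : ∀ n, IsOpen (Prod.map (↑) (↑) ⁻¹' W : Set (S n × T n)))
    {a : S 0} {b : T 0} (ha : a ∈ C 0) (hb : b ∈ D 0) (hab : ((a : A), (b : B)) ∈ W) :
    ∃ U V, IsOpen[directLimitTopology S] U ∧ IsOpen[directLimitTopology T] V ∧
      (a : A) ∈ U ∧ (b : B) ∈ V ∧ U ×ˢ V ⊆ W := by
  have step : ∀ k (p : Set (S k) × Set (T k)),
      (IsCompact p.1 ∧ p.1 ⊆ C k ∧ IsCompact p.2 ∧ p.2 ⊆ D k ∧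
        p.1 ×ˢ p.2 ⊆ Prod.map (↑) (↑) ⁻¹' W) →
      ∃ q : Set (S (k + 1)) × Set (T (k + 1)),
        (IsCompact q.1 ∧ q.1 ⊆ C (k + 1) ∧ IsCompact q.2 ∧ q.2 ⊆ D (k + 1) ∧
          q.1 ×ˢ q.2 ⊆ Prod.map (↑) (↑) ⁻¹' W) ∧
        inclusion (hS.mono (Nat.le_succ k)) '' p.1 ⊆ interior (q.1 ∪ (C (k + 1))ᶜ) ∧
        inclusion (hT.mono (Nat.le_succ k)) '' p.2 ⊆ interior (q.2 ∪ (D (k + 1))ᶜ) := by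
    rintro k ⟨E, F⟩ ⟨hE, -, hF, -, hEF⟩
    obtain ⟨E', F', hgood, hrel⟩ := exists_compact_prod_subset_between_within
      (hC.isCompact (k + 1)) (hD.isCompact (k + 1)) (hW (k + 1))
      (hE.image (hS.continuous_inclusion k)) (hF.image (hT.continuous_inclusion k))
      (by rintro ⟨_, _⟩ ⟨⟨x, hx, rfl⟩, ⟨y, hy, rfl⟩⟩; exact hEF (mk_mem_prod hx hy))
    exact ⟨(E', F'), hgood, hrel⟩
  obtain ⟨E₀, F₀, hgood₀, haE₀, hbF₀⟩ := exists_compact_prod_subset_between_within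
    (hC.isCompact 0) (hD.isCompact 0) (hW 0) isCompact_singleton isCompact_singleton
    (singleton_prod_singleton.trans_subset (singleton_subset_iff.2 hab))
  obtain ⟨f, hf0, hf⟩ := exists_seq_of_forall_exists_succ _ _ (E₀, F₀) hgood₀ step
  obtain ⟨hEmono, hEopen⟩ := hC.isOpen_iUnion_of_subset_interior hS (fun n => (hf n).1.2.1)
    fun n => (hf n).2.1
  obtain ⟨hFmono, hFopen⟩ := hD.isOpen_iUnion_of_subset_interior hT
    (fun n => (hf n).1.2.2.2.1) fun n => (hf n).2.2
  refine ⟨_, _, hEopen, hFopen, mem_iUnion.2 ⟨0, a, ?_, rfl⟩, mem_iUnion.2 ⟨0, b, ?_, rfl⟩, ?_⟩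
  · rw [hf0]
    exact interior_union_compl_inter_subset _ _ ⟨haE₀ rfl, ha⟩
  · rw [hf0]
    exact interior_union_compl_inter_subset _ _ ⟨hbF₀ rfl, hb⟩
  · rintro ⟨x, y⟩ ⟨hx, hy⟩
    obtain ⟨j, hj⟩ := mem_iUnion.1 hx
    obtain ⟨l, hl⟩ := mem_iUnion.1 hy
    obtain ⟨x', hx', rfl⟩ := hEmono (le_max_left j l) hj
    obtain ⟨y', hy', rfl⟩ := hFmono (le_max_right j l) hl
    exact (hf (max j l)).1.2.2.2.2 (mk_mem_prod hx' hy')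

end IsKOmegaChain

end DirectLimit

/-- Compatibility of direct limits and products for ascending sequences of
locally kω spaces: given ascending sequences `Xₙ`, `Yₙ` of locally kω spaces
(with continuous inclusion maps) with unions `X`, `Y` carrying the direct limit
topologies, the direct limit topology on `⋃ₙ (Xₙ × Yₙ)` coincides with the
product topology on `X × Y`; i.e. the natural continuous bijection
`lim→ (Xₙ × Yₙ) → X × Y` is a homeomorphism. -/
theorem directLimit_prod_eq_prod_directLimit
    {A B : Type*}
    (S : ℕ → Set A) (hSmono : Monotone S) (hScover : (⋃ n, S n) = Set.univ)
    (tS : ∀ n, TopologicalSpace (S n))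
    (hSincl : ∀ n, @Continuous _ _ (tS n) (tS (n + 1))
      (Set.inclusion (hSmono (Nat.le_succ n))))
    (hSlkom : ∀ n, @IsLocallyKOmega (S n) (tS n))
    (T : ℕ → Set B) (hTmono : Monotone T) (hTcover : (⋃ n, T n) = Set.univ)
    (tT : ∀ n, TopologicalSpace (T n))
    (hTincl : ∀ n, @Continuous _ _ (tT n) (tT (n + 1))
      (Set.inclusion (hTmono (Nat.le_succ n))))
    (hTlkom : ∀ n, @IsLocallyKOmega (T n) (tT n)) :
    (⨆ n, TopologicalSpace.coinduced
        (fun p : S n × T n => (((p.1 : A), (p.2 : B)) : A × B))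
        (@instTopologicalSpaceProd _ _ (tS n) (tT n)))
      = @instTopologicalSpaceProd A B
          (⨆ n, TopologicalSpace.coinduced Subtype.val (tS n))
          (⨆ n, TopologicalSpace.coinduced Subtype.val (tT n)) := by
  let := tS
  let := tT
  have hS : HasContinuousInclusions S := ⟨hSmono, hSincl⟩
  have hT : HasContinuousInclusions T := ⟨hTmono, hTincl⟩
  have : ∀ n, T2Space (S n) := fun n => (hSlkom n).1
  have : ∀ n, T2Space (T n) := fun n => (hTlkom n).1
  let : TopologicalSpace A := directLimitTopology S
  let : TopologicalSpace B := directLimitTopology T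
  refine le_antisymm (iSup_le fun n => continuous_iff_coinduced_le.1 ?_) fun W hW => ?_
  · exact ((continuous_val_directLimitTopology n).comp continuous_fst).prodMk
      ((continuous_val_directLimitTopology n).comp continuous_snd)
  have hWn : ∀ n, IsOpen (Prod.map (↑) (↑) ⁻¹' W : Set (S n × T n)) := fun n =>
    isOpen_coinduced.1 (isOpen_iSup_iff.1 hW n)
  refine isOpen_prod_iff.2 fun a b hab => ?_
  obtain ⟨N, ha, hb⟩ : ∃ N, a ∈ S N ∧ b ∈ T N := by
    obtain ⟨i, hi⟩ := mem_iUnion.1 (hScover.symm ▸ mem_univ a)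
    obtain ⟨j, hj⟩ := mem_iUnion.1 (hTcover.symm ▸ mem_univ b)
    exact ⟨max i j, hSmono (le_max_left i j) hi, hTmono (le_max_right i j) hj⟩
  obtain ⟨C, hC, haC⟩ := (hS.shift N).exists_isKOmegaChain (fun n => hSlkom (N + n)) ⟨a, ha⟩
  obtain ⟨D, hD, hbD⟩ := (hT.shift N).exists_isKOmegaChain (fun n => hTlkom (N + n)) ⟨b, hb⟩
  obtain ⟨U, V, hU, hV, haU, hbV, hUV⟩ := hC.exists_isOpen_prod_subset hD (hS.shift N)
    (hT.shift N) (fun n => hWn (N + n)) haC hbD hab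
  rw [hS.directLimitTopology_shift] at hU
  rw [hT.directLimitTopology_shift] at hV
  exact ⟨U, V, hU, hV, haU, hbV, hUV⟩
end

section
/- A topological group G is locally kω (its underlying space is locally kω) if and only if G has an open subgroup H whose underlying topological space is a kω-space. -/
/-!
Translates `xH` of an open kω subgroup `H` are open kω neighbourhoods of the points `x`.
Conversely, let `U` be an open kω neighbourhood of `1` with kω-sequence `(Kₙ)` and put
`Lₙ = ({1} ∪ Kₙ ∪ Kₙ⁻¹)^(n+1)`. These compact sets increase, exhaust the subgroup `H` generated
by `U`, and satisfy `Lₘ Lₙ ⊆ Lₘ₊ₙ₊₁`. A subset of `H` that is relatively open in every `Lₙ` is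
open: near a point `x ∈ Lₘ` it is the translate by `x` of a subset of `U` that is relatively open
in every `Kₙ ⊆ x⁻¹ Lₘ₊ₙ₊₁`, hence open in `U`.
-/

open Set Pointwise Topology

lemma isKOmegaSeq_iff {X : Type*} [TopologicalSpace X] {K : ℕ → Set X} :
    IsKOmegaSeq K ↔
      (∀ n, IsCompact (K n)) ∧ Monotone K ∧ (⋃ n, K n) = univ ∧ IsCoherentWith (range K) :=
  and_congr_right' <| and_congr_right' <| and_congr_right'
    ⟨fun h => ⟨fun U hU => (h U).2 fun n => hU _ (mem_range_self n)⟩,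
      fun h _ => h.isOpen_iff.trans forall_mem_range⟩

lemma Topology.IsCoherentWith.image_of_isQuotientMap {X Y : Type*} [TopologicalSpace X]
    [TopologicalSpace Y] {S : Set (Set X)} (hS : IsCoherentWith S) {f : X → Y}
    (hf : IsQuotientMap f) : IsCoherentWith ((f '' ·) '' S) :=
  .of_continuous_prop fun _ hg => hf.continuous_iff.2 <| hS.continuous_iff.2 fun s hs =>
    (hg _ (mem_image_of_mem _ hs)).comp hf.continuous.continuousOn (mapsTo_image f s)

lemma IsKOmega.of_homeomorph {X Y : Type*} [TopologicalSpace X] [TopologicalSpace Y]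
    (h : IsKOmega X) (e : X ≃ₜ Y) : IsKOmega Y := by
  obtain ⟨hX, K, hK⟩ := h
  obtain ⟨hKc, hKm, hKu, hKcoh⟩ := isKOmegaSeq_iff.1 hK
  refine ⟨e.symm.isEmbedding.t2Space, fun n => e '' K n, isKOmegaSeq_iff.2
    ⟨fun n => (hKc n).image e.continuous, fun _ _ hab => image_mono (hKm hab), ?_, ?_⟩⟩
  · rw [← image_iUnion, hKu, image_univ_of_surjective e.surjective]
  · have := hKcoh.image_of_isQuotientMap e.isQuotientMap
    rwa [← range_comp] at this

lemma IsCompact.pow {M : Type*} [Monoid M] [TopologicalSpace M] [ContinuousMul M] {s : Set M}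
    (hs : IsCompact s) : ∀ n : ℕ, IsCompact (s ^ n)
  | 0 => by simp
  | n + 1 => by rw [pow_succ]; exact (hs.pow n).mul hs

section ClosureExhaustion

variable {G : Type*} [Group G] {C : ℕ → Set G}

def closureExhaustion (C : ℕ → Set G) (n : ℕ) : Set G :=
  insert 1 (C n ∪ (C n)⁻¹) ^ (n + 1)

lemma one_mem_closureExhaustion (n : ℕ) : (1 : G) ∈ closureExhaustion C n :=
  subset_pow (mem_insert _ _) n.succ_ne_zero (mem_insert _ _)

lemma subset_closureExhaustion (n : ℕ) : C n ⊆ closureExhaustion C n :=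
  (subset_union_left.trans (subset_insert _ _)).trans
    (subset_pow (mem_insert _ _) n.succ_ne_zero)

lemma inv_closureExhaustion (n : ℕ) : (closureExhaustion C n)⁻¹ = closureExhaustion C n := by
  rw [closureExhaustion, ← inv_pow, inv_insert, union_inv, inv_inv, inv_one, union_comm]

lemma closureExhaustion_subset_closure (n : ℕ) :
    closureExhaustion C n ⊆ Subgroup.closure (⋃ n, C n) := by
  refine Subgroup.pow_subset (insert_subset (Subgroup.one_mem _) (union_subset ?_ ?_))
  · exact (subset_iUnion C n).trans Subgroup.subset_closure
  · rw [inv_subset, inv_coe_set]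
    exact (subset_iUnion C n).trans Subgroup.subset_closure

lemma isCompact_closureExhaustion [TopologicalSpace G] [ContinuousMul G] [ContinuousInv G]
    (hC : ∀ n, IsCompact (C n)) (n : ℕ) : IsCompact (closureExhaustion C n) :=
  (((hC n).union (hC n).inv).insert 1).pow _

variable (hC : Monotone C)
include hC

lemma monotone_insert_one_union_inv : Monotone fun n => insert (1 : G) (C n ∪ (C n)⁻¹) :=
  fun _ _ h => insert_subset_insert (union_subset_union (hC h) (inv_subset_inv.2 (hC h)))

lemma closureExhaustion_mono : Monotone (closureExhaustion C) := fun m n h =>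
  pow_subset_pow (monotone_insert_one_union_inv hC h) (mem_insert _ _) (by omega)

lemma closureExhaustion_mul_subset (m n : ℕ) :
    closureExhaustion C m * closureExhaustion C n ⊆ closureExhaustion C (m + n + 1) := by
  have hbase := monotone_insert_one_union_inv hC
  calc closureExhaustion C m * closureExhaustion C n
      ⊆ insert 1 (C (m + n + 1) ∪ (C (m + n + 1))⁻¹) ^ (m + 1) *
          insert 1 (C (m + n + 1) ∪ (C (m + n + 1))⁻¹) ^ (n + 1) :=
        mul_subset_mul (pow_subset_pow_left (hbase (by omega)))
          (pow_subset_pow_left (hbase (by omega)))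
    _ = closureExhaustion C (m + n + 1) := by
        rw [← pow_add, closureExhaustion]; congr 1; omega

lemma iUnion_closureExhaustion :
    ⋃ n, closureExhaustion C n = Subgroup.closure (⋃ n, C n) := by
  refine (iUnion_subset closureExhaustion_subset_closure).antisymm fun x hx => ?_
  induction hx using Subgroup.closure_induction with
  | mem x hx =>
    obtain ⟨n, hn⟩ := mem_iUnion.1 hx
    exact mem_iUnion.2 ⟨n, subset_closureExhaustion n hn⟩
  | one => exact mem_iUnion.2 ⟨0, one_mem_closureExhaustion 0⟩
  | mul x y _ _ hx hy =>
    obtain ⟨m, hm⟩ := mem_iUnion.1 hx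
    obtain ⟨n, hn⟩ := mem_iUnion.1 hy
    exact mem_iUnion.2 ⟨m + n + 1, closureExhaustion_mul_subset hC m n (mul_mem_mul hm hn)⟩
  | inv x _ hx =>
    obtain ⟨n, hn⟩ := mem_iUnion.1 hx
    exact mem_iUnion.2 ⟨n, by rw [← inv_closureExhaustion, inv_mem_inv]; exact hn⟩

end ClosureExhaustion

section TopologicalGroup

variable {G : Type*} [Group G] [TopologicalSpace G] {U : Set G}

lemma Topology.IsCoherentWith.of_mem_nhds_one [ContinuousMul G] (hU : U ∈ 𝓝 1)
    {S : Set (Set U)} (hS : IsCoherentWith S) {T : Set (Set G)}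
    (hST : ∀ x : G, ∀ s ∈ S, ∃ t ∈ T, MapsTo (fun u : U => x * u) s t) : IsCoherentWith T := by
  refine .of_continuous_prop fun f hf => continuous_iff_continuousAt.2 fun x => ?_
  have hcont : ContinuousOn (fun g => f (x * g)) U := by
    rw [continuousOn_iff_continuous_domRestrict]
    refine hS.continuous_iff.2 fun s hs => ?_
    obtain ⟨t, ht, hmaps⟩ := hST x s hs
    exact (hf t ht).comp (continuous_const.mul continuous_subtype_val).continuousOn hmaps
  have := (hcont.continuousAt hU).comp_of_eq (continuous_const_mul x⁻¹).continuousAt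
    (inv_mul_cancel x)
  simpa [Function.comp_def] using this

lemma IsKOmega.of_mem_nhds_one_of_closure_eq_top [IsTopologicalGroup G] [T2Space G]
    (hU : U ∈ 𝓝 1) (hUk : IsKOmega U) (hgen : Subgroup.closure U = ⊤) : IsKOmega G := by
  obtain ⟨-, K, hK⟩ := hUk
  obtain ⟨hKc, hKm, hKu, hKcoh⟩ := isKOmegaSeq_iff.1 hK
  set C : ℕ → Set G := fun n => (↑) '' K n
  have hCm : Monotone C := fun _ _ h => image_mono (hKm h)
  have hcover : ⋃ n, closureExhaustion C n = univ := by
    rw [iUnion_closureExhaustion hCm, ← image_iUnion, hKu, image_univ, Subtype.range_coe, hgen,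
      Subgroup.coe_top]
  refine ⟨‹_›, closureExhaustion C, isKOmegaSeq_iff.2
    ⟨isCompact_closureExhaustion fun n => (hKc n).image continuous_subtype_val,
      closureExhaustion_mono hCm, hcover, hKcoh.of_mem_nhds_one hU ?_⟩⟩
  rintro x _ ⟨n, rfl⟩
  obtain ⟨m, hm⟩ := mem_iUnion.1 (hcover.symm ▸ mem_univ x)
  exact ⟨_, mem_range_self (m + n + 1), fun u hu => closureExhaustion_mul_subset hCm m n
    (mul_mem_mul hm (subset_closureExhaustion n (mem_image_of_mem _ hu)))⟩

end TopologicalGroup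

/-- A Hausdorff topological group is locally kω if and only if it has an open
subgroup which is a kω-group. -/
theorem isLocallyKOmega_iff_exists_open_kOmega_subgroup
    (G : Type*) [Group G] [TopologicalSpace G] [IsTopologicalGroup G] [T2Space G] :
    IsLocallyKOmega G ↔ ∃ H : Subgroup G, IsOpen (H : Set G) ∧ IsKOmega H := by
  constructor
  · rintro ⟨-, hloc⟩
    obtain ⟨U, hUo, h1U, hUk⟩ := hloc 1
    set H := Subgroup.closure U
    have hUH : U ⊆ H := Subgroup.subset_closure
    have hU' : ((↑) ⁻¹' U : Set H) ∈ 𝓝 1 :=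
      continuous_subtype_val.continuousAt.preimage_mem_nhds (hUo.mem_nhds h1U)
    have hU'k : IsKOmega ((↑) ⁻¹' U : Set H) := hUk.of_homeomorph
      (IsEmbedding.subtypeVal.homeomorphOfSubsetRange (by rwa [Subtype.range_coe])).symm
    exact ⟨H, H.isOpen_of_mem_nhds (Filter.mem_of_superset (hUo.mem_nhds h1U) hUH),
      .of_mem_nhds_one_of_closure_eq_top hU' hU'k Subgroup.closure_closure_coe_preimage⟩
  · rintro ⟨H, hHo, hHk⟩
    exact ⟨‹_›, fun x => ⟨Homeomorph.mulLeft x '' H, (Homeomorph.mulLeft x).isOpen_image.2 hHo,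
      ⟨1, H.one_mem, mul_one x⟩, hHk.of_homeomorph ((Homeomorph.mulLeft x).image H)⟩⟩
end

section
/- Let (G, (q_i)) be the projective limit of a projective system of Hausdorff topological abelian groups (G_i, q_{ij}) such that each limit map q_i : G → G_i has dense image. Then every continuous character ξ : G → 𝕋 factors as ξ = θ ∘ q_i for some index i and some continuous character θ : G_i → 𝕋. -/
/-!
Continuity of `ξ` and the description of the limit topology give an index `i` and a
neighbourhood `U` of `1` in `G i` such that `ξ` maps `(q i)⁻¹' U` into the open right half
`centeredArc (π / 2)` of the circle. That half contains no nontrivial subgroup; quantitatively,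
a point whose powers `z ^ 2 ^ j`, `j ≤ m`, all lie in it is within angle `π / 2 ^ (m + 1)` of `1`.
Hence `ξ` kills the kernel of `q i`, the induced character of the dense subgroup `range (q i)`
is continuous, and it extends to `G i` by uniform continuity, the circle being complete.
-/

open Filter Topology Real Circle

theorem Circle.one_mem_centeredArc {r : ℝ} (hr : 0 < r) : (1 : Circle) ∈ centeredArc r :=
  ⟨0, by simpa using hr, Circle.exp_zero⟩

theorem Circle.mem_centeredArc_of_forall_pow_two_pow_mem {z : Circle} {m : ℕ}
    (hz : ∀ j ≤ m, z ^ 2 ^ j ∈ centeredArc (π / 2)) : z ∈ centeredArc (π / 2 ^ (m + 1)) := by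
  induction m with
  | zero => simpa using hz 0 le_rfl
  | succ m ih =>
    simpa [div_div, ← pow_succ'] using mem_centeredArc_div (div_le_self pi_nonneg one_le_two)
      (by simpa using ih fun j hj => hz j (hj.trans m.le_succ)) (hz (m + 1) le_rfl)

theorem MonoidHom.continuous_of_preimage_centeredArc_mem_nhds {A : Type*} [Group A]
    [TopologicalSpace A] [IsTopologicalGroup A] (f : A →* Circle)
    (hf : f ⁻¹' centeredArc (π / 2) ∈ 𝓝 1) : Continuous f := by
  refine continuous_of_continuousAt_one f ?_
  rw [ContinuousAt, map_one, hasBasis_centeredArc_div_two_pow.tendsto_right_iff]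
  intro m _
  have hpow : ∀ j ∈ Set.Iic m, ∀ᶠ x in 𝓝 (1 : A), f (x ^ 2 ^ j) ∈ centeredArc (π / 2) :=
    fun j _ => (continuous_pow (2 ^ j)).tendsto' 1 1 (one_pow _) hf
  filter_upwards [(Set.finite_Iic m).eventually_all.2 hpow] with x hx
  exact mem_centeredArc_of_forall_pow_two_pow_mem fun j hj => by simpa using hx j hj

theorem Subgroup.exists_continuous_extend_of_dense {G K : Type*} [CommGroup G]
    [TopologicalSpace G] [IsTopologicalGroup G] [Group K] [UniformSpace K] [IsUniformGroup K]
    [CompleteSpace K] [T0Space K] {H : Subgroup G} (hH : Dense (H : Set G)) (f : H →* K)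
    (hf : Continuous f) : ∃ θ : G →* K, Continuous θ ∧ ∀ h : H, θ h = f h := by
  let := IsTopologicalGroup.rightUniformSpace G
  have := isUniformGroup_of_commGroup (G := G)
  have hui : IsUniformInducing ((↑) : H → G) := isUniformEmbedding_subtype_val.isUniformInducing
  have hdr : DenseRange ((↑) : H → G) := hH.denseRange_val
  have hfu : UniformContinuous f := uniformContinuous_of_continuousAt_one f hf.continuousAt
  set ψ := (hui.isDenseInducing hdr).extend f
  have hψ : Continuous ψ := (uniformContinuous_uniformly_extend hui hdr hfu).continuous
  have hψf : ∀ h : H, ψ h = f h := uniformly_extend_of_ind hui hdr hfu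
  refine ⟨MonoidHom.mk' ψ fun a b => ?_, hψ, hψf⟩
  refine DenseRange.induction_on₂ hdr (isClosed_eq (by fun_prop) (by fun_prop)) (fun a b => ?_) a b
  rw [← Subgroup.coe_mul, hψf, hψf, hψf, map_mul]

theorem MonoidHom.exists_continuous_factor_of_mapsTo_centeredArc {L G : Type*} [CommGroup L]
    [CommGroup G] [TopologicalSpace G] [IsTopologicalGroup G] {q : L →* G} (hq : DenseRange q)
    (ξ : L →* Circle) {U : Set G} (hU : U ∈ 𝓝 1) (hξU : Set.MapsTo ξ (q ⁻¹' U) (centeredArc (π / 2))) :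
    ∃ θ : G →* Circle, Continuous θ ∧ ∀ x, ξ x = θ (q x) := by
  have hker : q.ker ≤ ξ.ker := fun x hx => eq_one_of_forall_pow_mem_centeredArc_pi_div_two
    fun n _ => by
      have hxn : q (x ^ n) ∈ U := by rw [map_pow, hx, one_pow]; exact mem_of_mem_nhds hU
      simpa using hξU hxn
  set f : q.range →* Circle := q.rangeRestrict.liftOfSurjective q.rangeRestrict_surjective
    ⟨ξ, by rwa [ker_rangeRestrict]⟩
  have hf : ∀ x, f (q.rangeRestrict x) = ξ x := fun x =>
    q.rangeRestrict.liftOfRightInverse_comp_apply _ _ _ x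
  have hfc : Continuous f := by
    refine f.continuous_of_preimage_centeredArc_mem_nhds
      (mem_of_superset (continuous_subtype_val.continuousAt.preimage_mem_nhds hU) ?_)
    rintro ⟨_, x, rfl⟩ hx
    change f (q.rangeRestrict x) ∈ centeredArc (π / 2)
    rw [hf]
    exact hξU hx
  obtain ⟨θ, hθ, hθf⟩ := Subgroup.exists_continuous_extend_of_dense (by rwa [coe_range]) f hfc
  exact ⟨θ, hθ, fun x => by rw [← hf, ← hθf]; rfl⟩

theorem exists_preimage_subset_of_mem_nhds_iInf_induced {I L : Type*} [Preorder I]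
    [IsDirected I (· ≤ ·)] [Nonempty I] {X : I → Type*} [∀ i, TopologicalSpace (X i)]
    (f : ∀ i, L → X i) (hf : Antitone fun i => TopologicalSpace.induced (f i) inferInstance)
    {x : L} {N : Set L} (hN : N ∈ @nhds L (⨅ i, TopologicalSpace.induced (f i) inferInstance) x) :
    ∃ i, ∃ U ∈ 𝓝 (f i x), f i ⁻¹' U ⊆ N := by
  have hdir : Directed (· ≥ ·) fun i => @nhds L (TopologicalSpace.induced (f i) inferInstance) x :=
    fun i j =>
      let ⟨k, hik, hjk⟩ := directed_of (· ≤ ·) i j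
      ⟨k, nhds_mono (hf hik), nhds_mono (hf hjk)⟩
  rw [nhds_iInf, mem_iInf_of_directed hdir] at hN
  obtain ⟨i, hi⟩ := hN
  rw [nhds_induced, mem_comap] at hi
  exact ⟨i, hi⟩

theorem character_factors_through_projectiveLimit_general
    {I : Type*} [Preorder I] [IsDirected I (· ≤ ·)] [Nonempty I]
    (G : I → Type*) [∀ i, CommGroup (G i)] [∀ i, TopologicalSpace (G i)]
    [∀ i, IsTopologicalGroup (G i)]
    (p : ∀ i j, i ≤ j → G j →* G i)
    (hp_cont : ∀ i j (h : i ≤ j), Continuous (p i j h))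
    {L : Type*} [CommGroup L] [tL : TopologicalSpace L]
    (q : ∀ i, L →* G i)
    (hq_compat : ∀ i j (h : i ≤ j), (p i j h).comp (q j) = q i)
    (hq_dense : ∀ i, DenseRange (q i))
    (hinit : tL = ⨅ i, TopologicalSpace.induced (q i) inferInstance)
    (ξ : L →* Circle) (hξ : Continuous ξ) :
    ∃ (i : I) (θ : G i →* Circle), Continuous θ ∧ ∀ x : L, ξ x = θ (q i x) := by
  have hanti : Antitone fun i => TopologicalSpace.induced (q i) inferInstance := fun i j hij => by
    change TopologicalSpace.induced (q j) _ ≤ TopologicalSpace.induced (q i) _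
    rw [← hq_compat i j hij, MonoidHom.coe_comp, ← induced_compose]
    exact induced_mono (hp_cont i j hij).le_induced
  have hξV : ξ ⁻¹' centeredArc (π / 2) ∈ 𝓝 1 := hξ.continuousAt.preimage_mem_nhds <| by
    rw [map_one]; exact (isOpen_centeredArc _).mem_nhds (one_mem_centeredArc (by positivity))
  subst hinit
  obtain ⟨i, U, hU, hUV⟩ := exists_preimage_subset_of_mem_nhds_iInf_induced _ hanti hξV
  obtain ⟨θ, hθ, hξθ⟩ :=
    MonoidHom.exists_continuous_factor_of_mapsTo_centeredArc (hq_dense i) ξ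
      (by rwa [map_one] at hU) hUV
  exact ⟨i, θ, hθ, hξθ⟩

/-- Let `(G, (q i))` be the projective limit of a projective system of Hausdorff
topological abelian groups `(G i, p)` (so the topology of `G` is the initial
topology with respect to the limit maps `q i`, which are compatible with the
bonding maps `p`), such that each `q i` has dense range. Then every continuous
character `ξ : G → 𝕋` factors as `ξ = θ ∘ q i` for some index `i` and some
continuous character `θ : G i → 𝕋`. -/
theorem character_factors_through_projectiveLimit
    {I : Type*} [Preorder I] [IsDirected I (· ≤ ·)] [Nonempty I]
    (G : I → Type*) [∀ i, CommGroup (G i)] [∀ i, TopologicalSpace (G i)]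
    [∀ i, IsTopologicalGroup (G i)] [∀ i, T2Space (G i)]
    (p : ∀ i j, i ≤ j → G j →* G i)
    (hp_cont : ∀ i j (h : i ≤ j), Continuous (p i j h))
    {L : Type*} [CommGroup L] [tL : TopologicalSpace L] [IsTopologicalGroup L]
    (q : ∀ i, L →* G i)
    (hq_compat : ∀ i j (h : i ≤ j), (p i j h).comp (q j) = q i)
    (hq_dense : ∀ i, DenseRange (q i))
    (hinit : tL = ⨅ i, TopologicalSpace.induced (q i) inferInstance)
    (ξ : L →* Circle) (hξ : Continuous ξ) :
    ∃ (i : I) (θ : G i →* Circle), Continuous θ ∧ ∀ x : L, ξ x = θ (q i x) :=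
  character_factors_through_projectiveLimit_general G p hp_cont (tL := tL) q hq_compat hq_dense
    hinit ξ hξ
end
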